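/- arXiv:1210.2879 — 5 statements merged into one kernel-verified Lean document; each statement's English description precedes it below -/
import Mathlib

section
/- Suppose λ_p = ν/p^{α} for p ≥ 1 with constants ν > 0 and α > 1. Then there exist constants 0 < c ≤ C such that for all sufficiently small τ > 0, c·τ^{1−1/α} ≤ ∑_{p≥1} τλ_p/(τ+λ_p) ≤ C·τ^{1−1/α}. -/
/-!
Put `y = (ν / τ)^{1/α}`, so that `λ_p ≥ τ` exactly for `p ≤ y`. Each term `τ λ_p / (τ + λ_p)`
lies between `min(τ, λ_p) / 2` and `min(τ, λ_p)`. Hence the first `⌊y⌋` terms contribute about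
`y τ`, and the tail `∑_{p > y} ν p^{-α}` is, by comparison with `∫_y^∞ ν t^{-α} dt`, at most a
constant times `ν y^{1-α} = y τ`. Finally `y τ = ν^{1/α} τ^{1-1/α}`.
-/

open Real Finset

lemma sum_range_rpow_neg_le {α : ℝ} (hα : 1 < α) {x : ℝ} (hx : 0 < x) (n : ℕ) :
    ∑ i ∈ range n, (x + (i + 1 : ℕ)) ^ (-α) ≤ x ^ (1 - α) / (α - 1) := by
  have hanti : AntitoneOn (fun t : ℝ => t ^ (-α)) (Set.Icc x (x + n)) := fun s hs t _ hst =>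
    rpow_le_rpow_of_nonpos (hx.trans_le hs.1) hst (by linarith)
  have hzero : (0 : ℝ) ∉ Set.uIcc x (x + n) := by
    rw [Set.uIcc_of_le (by linarith [n.cast_nonneg (α := ℝ)])]
    exact fun h => hx.not_ge h.1
  calc _ ≤ ∫ t in x..x + n, t ^ (-α) := hanti.sum_le_integral
    _ = (x ^ (1 - α) - (x + n) ^ (1 - α)) / (α - 1) := by
      rw [integral_rpow (Or.inr ⟨by linarith, hzero⟩), neg_add_eq_sub]
      rw [div_eq_div_iff (by linarith) (by linarith)]
      ring
    _ ≤ x ^ (1 - α) / (α - 1) := by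
      have : 0 ≤ (x + n) ^ (1 - α) := rpow_nonneg (by positivity) _
      gcongr
      linarith

lemma mul_div_add_le_left {a b : ℝ} (ha : 0 ≤ a) (hb : 0 ≤ b) : a * b / (a + b) ≤ a := by
  rcases (add_nonneg ha hb).eq_or_lt with h | h
  · simp [← h, ha]
  · rw [div_le_iff₀ h]; nlinarith

lemma mul_div_add_le_right {a b : ℝ} (ha : 0 ≤ a) (hb : 0 ≤ b) : a * b / (a + b) ≤ b := by
  rw [mul_comm, add_comm]; exact mul_div_add_le_left hb ha

lemma half_le_mul_div_add {a b : ℝ} (ha : 0 < a) (hab : a ≤ b) : a / 2 ≤ a * b / (a + b) := by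
  rw [div_le_div_iff₀ two_pos (by linarith)]; nlinarith

/-- The paper's `λ_p = ν p^{-α}`, indexed from `p = 0` instead of `p = 1`. -/
noncomputable def powerDecay (ν α : ℝ) (p : ℕ) : ℝ := ν * ((p : ℝ) + 1) ^ (-α)

/-- The paper's `S(τ)`: each term is half the harmonic mean of `τ` and `λ_p`. -/
noncomputable def harmonicSum (ν α τ : ℝ) : ℝ :=
  ∑' p : ℕ, τ * powerDecay ν α p / (τ + powerDecay ν α p)

section
variable {ν α τ : ℝ}

lemma powerDecay_nonneg (hν : 0 ≤ ν) (p : ℕ) : 0 ≤ powerDecay ν α p :=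
  mul_nonneg hν (rpow_nonneg (by positivity) _)

lemma summable_powerDecay (hα : 1 < α) : Summable (powerDecay ν α) := by
  have h := (summable_nat_add_iff 1).2 (summable_nat_rpow.2 (neg_lt_neg hα))
  exact (h.congr fun p => by push_cast; rfl).mul_left ν

lemma tsum_powerDecay_nat_add_le (hν : 0 ≤ ν) (hα : 1 < α) {N : ℕ} (hN : 1 ≤ N) :
    ∑' p : ℕ, powerDecay ν α (p + N) ≤ ν * ((N : ℝ) ^ (1 - α) / (α - 1)) := by
  have hshift : ∀ p : ℕ, powerDecay ν α (p + N) = ν * ((N : ℝ) + (p + 1 : ℕ)) ^ (-α) := by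
    intro p; simp only [powerDecay]; push_cast; ring_nf
  simp_rw [hshift, tsum_mul_left]
  gcongr
  exact Real.tsum_le_of_sum_range_le (fun _ => rpow_nonneg (by positivity) _)
    (sum_range_rpow_neg_le hα (by exact_mod_cast hN))

lemma summable_harmonicSum_term (hν : 0 ≤ ν) (hα : 1 < α) (hτ : 0 ≤ τ) :
    Summable fun p => τ * powerDecay ν α p / (τ + powerDecay ν α p) :=
  (summable_powerDecay hα).of_nonneg_of_le
    (fun p => by have := powerDecay_nonneg (α := α) hν p; positivity)
    (fun p => mul_div_add_le_right hτ (powerDecay_nonneg hν p))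

lemma harmonicSum_le (hν : 0 ≤ ν) (hα : 1 < α) (hτ : 0 ≤ τ) {N : ℕ} (hN : 1 ≤ N) :
    harmonicSum ν α τ ≤ N * τ + ν * ((N : ℝ) ^ (1 - α) / (α - 1)) := by
  have hsum := summable_harmonicSum_term hν hα hτ
  rw [harmonicSum, ← hsum.sum_add_tsum_nat_add N]
  gcongr
  · calc _ ≤ ∑ _ ∈ range N, τ :=
          sum_le_sum fun p _ => mul_div_add_le_left hτ (powerDecay_nonneg hν p)
      _ = N * τ := by simp
  · refine le_trans ?_ (tsum_powerDecay_nat_add_le hν hα hN)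
    exact ((summable_nat_add_iff N).2 hsum).tsum_le_tsum
      (fun p => mul_div_add_le_right hτ (powerDecay_nonneg hν _))
      ((summable_nat_add_iff N).2 (summable_powerDecay hα))

lemma le_harmonicSum (hν : 0 ≤ ν) (hα : 1 < α) (hτ : 0 < τ) {N : ℕ} (hN : (N : ℝ) ^ α * τ ≤ ν) :
    N * τ / 2 ≤ harmonicSum ν α τ := by
  have hterm : ∀ p ∈ range N, τ / 2 ≤ τ * powerDecay ν α p / (τ + powerDecay ν α p) := by
    intro p hp
    have hpN : (p : ℝ) + 1 ≤ N := by exact_mod_cast mem_range.1 hp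
    have hpow : 0 < ((p : ℝ) + 1) ^ α := by positivity
    refine half_le_mul_div_add hτ ?_
    rw [powerDecay, rpow_neg (by positivity), ← div_eq_mul_inv, le_div_iff₀ hpow]
    calc τ * ((p : ℝ) + 1) ^ α ≤ τ * (N : ℝ) ^ α := by gcongr
      _ ≤ ν := by linarith
  calc N * τ / 2 = ∑ _ ∈ range N, τ / 2 := by simp; ring
    _ ≤ ∑ p ∈ range N, τ * powerDecay ν α p / (τ + powerDecay ν α p) := sum_le_sum hterm
    _ ≤ harmonicSum ν α τ := (summable_harmonicSum_term hν hα hτ.le).sum_le_tsum _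
        (fun p _ => by have := powerDecay_nonneg (α := α) hν p; positivity)

lemma harmonicSum_bounds (hα : 1 < α) (hτ : 0 < τ) {y : ℝ} (hy : 2 ≤ y) (hyτ : y ^ α * τ = ν) :
    y * τ / 4 ≤ harmonicSum ν α τ ∧ harmonicSum ν α τ ≤ (1 + 2 ^ (α - 1) / (α - 1)) * (y * τ) := by
  have hν : 0 ≤ ν := hyτ ▸ by positivity
  set N := ⌊y⌋₊
  have hNy : (N : ℝ) ≤ y := Nat.floor_le (by linarith)
  have hyN : y / 2 ≤ N := by linarith [Nat.sub_one_lt_floor y]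
  have hN : 1 ≤ N := by exact_mod_cast (show (1 : ℝ) ≤ N by linarith)
  constructor
  · have hNα : (N : ℝ) ^ α * τ ≤ ν := by
      rw [← hyτ]; gcongr
    calc y * τ / 4 ≤ N * τ / 2 := by nlinarith
      _ ≤ harmonicSum ν α τ := le_harmonicSum hν hα hτ hNα
  · have htail : ν * (N : ℝ) ^ (1 - α) ≤ 2 ^ (α - 1) * (y * τ) :=
      calc ν * (N : ℝ) ^ (1 - α) ≤ ν * (y / 2) ^ (1 - α) := by
            gcongr ν * ?_
            exact rpow_le_rpow_of_nonpos (by linarith) hyN (by linarith)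
        _ = 2 ^ (α - 1) * (ν * y ^ (1 - α)) := by
            rw [div_rpow (by linarith) zero_le_two, div_eq_mul_inv, ← rpow_neg zero_le_two,
              neg_sub]
            ring
        _ = 2 ^ (α - 1) * (y * τ) := by
            rw [← hyτ, mul_right_comm (y ^ α), ← rpow_add (by linarith), add_sub_cancel, rpow_one]
    calc harmonicSum ν α τ ≤ N * τ + ν * ((N : ℝ) ^ (1 - α) / (α - 1)) :=
          harmonicSum_le hν hα hτ.le hN
      _ ≤ y * τ + 2 ^ (α - 1) * (y * τ) / (α - 1) := by
          rw [← mul_div_assoc]; gcongr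
      _ = (1 + 2 ^ (α - 1) / (α - 1)) * (y * τ) := by ring

end

theorem stmt3 (ν α : ℝ) (hν : 0 < ν) (hα : 1 < α) :
    ∃ c C : ℝ, 0 < c ∧ c ≤ C ∧ ∃ τ0 : ℝ, 0 < τ0 ∧ ∀ τ : ℝ, 0 < τ → τ < τ0 →
      c * τ ^ (1 - 1 / α) ≤
          (∑' p : ℕ, τ * (ν * ((p : ℝ) + 1) ^ (-α)) / (τ + ν * ((p : ℝ) + 1) ^ (-α))) ∧
        (∑' p : ℕ, τ * (ν * ((p : ℝ) + 1) ^ (-α)) / (τ + ν * ((p : ℝ) + 1) ^ (-α)))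
          ≤ C * τ ^ (1 - 1 / α) := by
  have hα0 : 0 < α := by linarith
  have hK : 0 ≤ 2 ^ (α - 1) / (α - 1) := div_nonneg (by positivity) (by linarith)
  have hνα : 0 < ν ^ (1 / α) := by positivity
  refine ⟨ν ^ (1 / α) / 4, ν ^ (1 / α) * (1 + 2 ^ (α - 1) / (α - 1)), by positivity,
    by nlinarith, ν / 2 ^ α, by positivity, fun τ hτ hτ0 => ?_⟩
  set y := (ν / τ) ^ (1 / α) with hy_def
  have hyα : y ^ α = ν / τ := by
    rw [← rpow_mul (by positivity), one_div_mul_cancel hα0.ne', rpow_one]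
  have hy : 2 ≤ y := by
    rw [← rpow_le_rpow_iff zero_le_two (by positivity) hα0, hyα, le_div_iff₀ hτ]
    rw [lt_div_iff₀ (by positivity)] at hτ0
    linarith
  have hscale : y * τ = ν ^ (1 / α) * τ ^ (1 - 1 / α) := by
    rw [hy_def, div_rpow hν.le hτ.le, sub_eq_add_neg, rpow_add hτ, rpow_one, rpow_neg hτ.le]
    field_simp
  have hyτ : y ^ α * τ = ν := by rw [hyα]; field_simp
  obtain ⟨hlow, hup⟩ := harmonicSum_bounds hα hτ hy hyτ
  simp only [harmonicSum, powerDecay] at hlow hup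
  exact ⟨by linear_combination hlow - hscale / 4,
    by linear_combination hup + (1 + 2 ^ (α - 1) / (α - 1)) * hscale⟩
end

section
/- Suppose 0 ≤ λ_p ≤ C·exp(−p^{1/d}) for all p ≥ 1, with C > 0 and d a positive integer. Then there is a constant C_d such that for all sufficiently small τ ∈ (0, 1/e), ∑_{p≥1} τλ_p/(τ+λ_p) ≤ C_d · τ · (log(1/τ))^d. -/
open Real Finset

namespace Stmt5Aux

noncomputable def a (d n : ℕ) : ℝ := (n : ℝ) ^ (1 / (d : ℝ))

lemma a_nonneg (d n : ℕ) : 0 ≤ a d n := Real.rpow_nonneg (Nat.cast_nonneg n) _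

lemma a_pos (d : ℕ) {n : ℕ} (hn : 1 ≤ n) : 0 < a d n :=
  Real.rpow_pos_of_pos (by exact_mod_cast hn) _

lemma a_mono (d : ℕ) {m n : ℕ} (h : m ≤ n) : a d m ≤ a d n :=
  Real.rpow_le_rpow (Nat.cast_nonneg m) (by exact_mod_cast h) (by positivity)

lemma a_pow (d : ℕ) (hd : 1 ≤ d) (n : ℕ) : (a d n) ^ d = (n : ℝ) := by
  have hdne : (d : ℝ) ≠ 0 := by exact_mod_cast (by omega : d ≠ 0)
  rw [a, ← Real.rpow_natCast ((n : ℝ) ^ (1 / (d : ℝ))) d, ← Real.rpow_mul (Nat.cast_nonneg n),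
    one_div, inv_mul_cancel₀ hdne, Real.rpow_one]

lemma a_zero (d : ℕ) (hd : 1 ≤ d) : a d 0 = 0 := by
  have hdne : (d : ℝ) ≠ 0 := by exact_mod_cast (by omega : d ≠ 0)
  rw [a, Nat.cast_zero, Real.zero_rpow (one_div_ne_zero hdne)]

lemma gap (d : ℕ) (hd : 1 ≤ d) (p : ℕ) :
    a d (p + 1) / (d * ((p : ℝ) + 1)) ≤ a d (p + 1) - a d p := by
  set A := a d (p + 1) with hA
  set B := a d p with hB
  have hBA : B ≤ A := a_mono d (Nat.le_succ p)
  have hApos : 0 < A := a_pos d (Nat.le_add_left 1 p)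
  have hBnn : 0 ≤ B := a_nonneg d p
  set σ : ℝ := ∑ i ∈ Finset.range d, A ^ i * B ^ (d - 1 - i) with hσ
  have hprod : σ * (A - B) = 1 := by
    have := geom_sum₂_mul A B d
    rw [hσ, this, a_pow d hd, a_pow d hd]
    push_cast; ring
  have hσle : σ ≤ (d : ℝ) * A ^ (d - 1) := by
    have hterm : ∀ i ∈ Finset.range d, A ^ i * B ^ (d - 1 - i) ≤ A ^ (d - 1) := by
      intro i hi
      have hi' : i < d := Finset.mem_range.mp hi
      calc A ^ i * B ^ (d - 1 - i) ≤ A ^ i * A ^ (d - 1 - i) := by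
            have := pow_le_pow_left₀ hBnn hBA (d - 1 - i)
            exact mul_le_mul_of_nonneg_left this (pow_nonneg hApos.le i)
        _ = A ^ (d - 1) := by rw [← pow_add]; congr 1; omega
    calc σ ≤ ∑ _i ∈ Finset.range d, A ^ (d - 1) := Finset.sum_le_sum hterm
      _ = (d : ℝ) * A ^ (d - 1) := by
          rw [Finset.sum_const, Finset.card_range, nsmul_eq_mul]
  have hσpos : 0 < σ := by
    by_contra h
    push_neg at h
    have : σ * (A - B) ≤ 0 :=
      mul_nonpos_of_nonpos_of_nonneg h (sub_nonneg.mpr hBA)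
    linarith [hprod]
  have hpow : A ^ d = A ^ (d - 1) * A := by
    rw [← pow_succ]; congr 1; omega
  have hAd : A ^ d = (p : ℝ) + 1 := by rw [a_pow d hd]; push_cast; ring
  -- A / (d * (p+1)) = 1 / (d * A^(d-1))  and  A - B = 1/σ ≥ 1/(d A^(d-1))
  have hApow_pos : 0 < A ^ (d - 1) := pow_pos hApos _
  have hdpos : (0 : ℝ) < d := by exact_mod_cast (by omega : 0 < d)
  have h1 : A / ((d : ℝ) * ((p : ℝ) + 1)) = 1 / ((d : ℝ) * A ^ (d - 1)) := by
    rw [← hAd, hpow]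
    field_simp
  have hsub : A - B = 1 / σ := by
    field_simp
    linarith [hprod]
  rw [h1, hsub]
  apply one_div_le_one_div_of_le hσpos hσle

lemma step (d : ℕ) (hd : 1 ≤ d) {δ : ℝ} (hδ : 0 < δ) (p : ℕ) :
    δ * (a d (p + 1) / (d * ((p : ℝ) + 1))) * Real.exp (-(δ * a d (p + 1))) ≤
      Real.exp (-(δ * a d p)) - Real.exp (-(δ * a d (p + 1))) := by
  set A := a d (p + 1)
  set B := a d p
  have hgap := gap d hd p
  have h1 : Real.exp (-(δ * B)) =
      Real.exp (-(δ * A)) * Real.exp (δ * (A - B)) := by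
    rw [← Real.exp_add]; ring_nf
  have h2 : δ * (A - B) + 1 ≤ Real.exp (δ * (A - B)) := Real.add_one_le_exp _
  have hE : 0 < Real.exp (-(δ * A)) := Real.exp_pos _
  rw [h1]
  have h3 : δ * (A / (d * ((p : ℝ) + 1))) ≤ δ * (A - B) :=
    mul_le_mul_of_nonneg_left hgap hδ.le
  nlinarith [mul_le_mul_of_nonneg_left h2 hE.le, mul_le_mul_of_nonneg_right h3 hE.le]

lemma pow_mul_exp_neg_le (m : ℕ) {y : ℝ} (hy : 0 ≤ y) :
    y ^ m * Real.exp (-y) ≤ (m : ℝ) ^ m := by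
  rcases Nat.eq_zero_or_pos m with hm | hm
  · subst hm
    simpa using Real.exp_le_one_iff.mpr (neg_nonpos.mpr hy)
  · have hmR : (0 : ℝ) < m := by exact_mod_cast hm
    have h1 : y / m ≤ Real.exp (y / m) := by linarith [Real.add_one_le_exp (y / m)]
    have h2 : (y / m) ^ m ≤ Real.exp (y / m) ^ m :=
      pow_le_pow_left₀ (div_nonneg hy hmR.le) h1 m
    have h3 : Real.exp (y / m) ^ m = Real.exp y := by
      rw [← Real.exp_nat_mul]
      congr 1
      field_simp
    have h4 : y ^ m ≤ (m : ℝ) ^ m * Real.exp y := by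
      rw [h3] at h2
      rw [div_pow] at h2
      have := (div_le_iff₀ (pow_pos hmR m)).mp h2
      linarith
    calc y ^ m * Real.exp (-y) ≤ ((m : ℝ) ^ m * Real.exp y) * Real.exp (-y) :=
          mul_le_mul_of_nonneg_right h4 (Real.exp_pos _).le
      _ = (m : ℝ) ^ m := by
          rw [mul_assoc, ← Real.exp_add, add_neg_cancel, Real.exp_zero, mul_one]

lemma term_bound (d : ℕ) (hd : 1 ≤ d) {ε : ℝ} (hε : 0 < ε) (p : ℕ) :
    Real.exp (-(ε * a d (p + 1))) ≤
      ((2 * (d : ℝ)) ^ d / ε ^ d) *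
        (Real.exp (-(ε / 2 * a d p)) - Real.exp (-(ε / 2 * a d (p + 1)))) := by
  obtain ⟨e, rfl⟩ : ∃ e, d = e + 1 := ⟨d - 1, by omega⟩
  set A := a (e + 1) (p + 1) with hAdef
  set B := a (e + 1) p with hBdef
  set E : ℝ := Real.exp (-(ε / 2 * A)) with hEdef
  have hApos : 0 < A := a_pos (e + 1) (Nat.le_add_left 1 p)
  have hAd : A ^ (e + 1) = (p : ℝ) + 1 := by
    rw [hAdef, a_pow (e + 1) (by omega)]; push_cast; ring
  have hEpos : 0 < E := Real.exp_pos _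
  have hT : Real.exp (-(ε * A)) = E * E := by
    rw [hEdef, ← Real.exp_add]; ring_nf
  -- f1 : (ε/2*A)^e * E ≤ e^e
  have f1 : (ε / 2 * A) ^ e * E ≤ (e : ℝ) ^ e :=
    pow_mul_exp_neg_le e (by positivity)
  -- f2 : (ε/2) * (A/((e+1)*(p+1))) * E ≤ D
  have f2 := step (e + 1) (by omega) (δ := ε / 2) (by positivity) p
  push_cast at f2
  set D : ℝ := Real.exp (-(ε / 2 * B)) - E with hDdef
  have hf2 : ε / 2 * (A / (((e : ℝ) + 1) * ((p : ℝ) + 1))) * E ≤ D := f2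
  have hf2nn : 0 ≤ ε / 2 * (A / (((e : ℝ) + 1) * ((p : ℝ) + 1))) * E := by positivity
  have hDnn : 0 ≤ D := le_trans hf2nn hf2
  -- multiply f1 and f2
  have hmul : ((ε / 2 * A) ^ e * E) * (ε / 2 * (A / (((e : ℝ) + 1) * ((p : ℝ) + 1))) * E) ≤
      (e : ℝ) ^ e * D := by
    apply mul_le_mul f1 hf2 hf2nn (by positivity)
  have hlhs : ((ε / 2 * A) ^ e * E) * (ε / 2 * (A / (((e : ℝ) + 1) * ((p : ℝ) + 1))) * E) =
      (E * E) * (ε / 2) ^ (e + 1) / ((e : ℝ) + 1) := by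
    have hp1 : ((p : ℝ) + 1) = A ^ (e + 1) := hAd.symm
    rw [hp1]
    have hAe : A ^ (e + 1) = A ^ e * A := by ring
    field_simp
    ring
  rw [hlhs] at hmul
  -- conclude
  rw [hT]
  rw [div_mul_eq_mul_div, le_div_iff₀ (by positivity : (0:ℝ) < ε ^ (e + 1))]
  have hhalf : (ε : ℝ) ^ (e + 1) = (ε / 2) ^ (e + 1) * 2 ^ (e + 1) := by
    rw [← mul_pow]
    congr 1
    field_simp
  have hee : ((e : ℝ) + 1) * (e : ℝ) ^ e ≤ ((e : ℝ) + 1) ^ (e + 1) := by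
    have h1 : (e : ℝ) ^ e ≤ ((e : ℝ) + 1) ^ e :=
      pow_le_pow_left₀ (by positivity) (by linarith) e
    calc ((e : ℝ) + 1) * (e : ℝ) ^ e ≤ ((e : ℝ) + 1) * ((e : ℝ) + 1) ^ e :=
          mul_le_mul_of_nonneg_left h1 (by positivity)
      _ = ((e : ℝ) + 1) ^ (e + 1) := by ring
  have hconst : ((e : ℝ) + 1) * 2 ^ (e + 1) * (e : ℝ) ^ e ≤ (2 * ((e : ℝ) + 1)) ^ (e + 1) := by
    rw [mul_pow]
    nlinarith [pow_pos (by positivity : (0:ℝ) < 2) (e + 1), hee,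
      mul_le_mul_of_nonneg_left hee (pow_pos (by positivity : (0:ℝ) < 2) (e + 1)).le]
  -- from hmul : E*E*(ε/2)^(e+1)/((e:ℝ)+1) ≤ e^e * D
  have hmul2 : E * E * (ε / 2) ^ (e + 1) ≤ ((e : ℝ) + 1) * (e : ℝ) ^ e * D := by
    have h := (div_le_iff₀ (by positivity : (0:ℝ) < (e : ℝ) + 1)).mp hmul
    linarith [h]
  calc E * E * ε ^ (e + 1) = (E * E * (ε / 2) ^ (e + 1)) * 2 ^ (e + 1) := by
        rw [hhalf]; ring
    _ ≤ (((e : ℝ) + 1) * (e : ℝ) ^ e * D) * 2 ^ (e + 1) :=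
        mul_le_mul_of_nonneg_right hmul2 (by positivity)
    _ = (((e : ℝ) + 1) * 2 ^ (e + 1) * (e : ℝ) ^ e) * D := by ring
    _ ≤ (2 * ((e : ℝ) + 1)) ^ (e + 1) * D :=
        mul_le_mul_of_nonneg_right hconst hDnn
    _ = (2 * (((e : ℕ) : ℝ) + 1)) ^ (e + 1) * D := by norm_num
    _ = (2 * (((e + 1 : ℕ) : ℝ))) ^ (e + 1) * D := by push_cast; ring

lemma sum_bound (d : ℕ) (hd : 1 ≤ d) {ε : ℝ} (hε : 0 < ε) :
    Summable (fun p : ℕ => Real.exp (-(ε * a d (p + 1)))) ∧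
      (∑' p : ℕ, Real.exp (-(ε * a d (p + 1)))) ≤ (2 * (d : ℝ)) ^ d / ε ^ d := by
  set K : ℝ := (2 * (d : ℝ)) ^ d / ε ^ d with hK
  have hKnn : 0 ≤ K := by positivity
  set F : ℕ → ℝ := fun p => Real.exp (-(ε / 2 * a d p)) with hF
  have hpartial : ∀ N : ℕ, ∑ p ∈ Finset.range N, Real.exp (-(ε * a d (p + 1))) ≤ K := by
    intro N
    calc ∑ p ∈ Finset.range N, Real.exp (-(ε * a d (p + 1)))
        ≤ ∑ p ∈ Finset.range N, K * (F p - F (p + 1)) :=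
          Finset.sum_le_sum fun p _ => term_bound d hd hε p
      _ = K * (F 0 - F N) := by rw [← Finset.mul_sum, Finset.sum_range_sub' F N]
      _ ≤ K := by
          have hF0 : F 0 = 1 := by simp [hF, a_zero d hd]
          have hFN : 0 ≤ F N := (Real.exp_pos _).le
          nlinarith
  have hsummable : Summable (fun p : ℕ => Real.exp (-(ε * a d (p + 1)))) :=
    summable_of_sum_range_le (fun n => (Real.exp_pos _).le) hpartial
  exact ⟨hsummable, Summable.tsum_le_of_sum_range_le hsummable hpartial⟩

end Stmt5Aux

open Stmt5Aux

theorem stmt5 (d : ℕ) (hd : 1 ≤ d) (C : ℝ) (hC : 0 < C) (l : ℕ → ℝ)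
    (hl : ∀ p : ℕ, 1 ≤ p → 0 ≤ l p)
    (hub : ∀ p : ℕ, 1 ≤ p → l p ≤ C * Real.exp (-(p : ℝ) ^ (1 / (d : ℝ)))) :
    ∃ Cd : ℝ, ∃ τ0 : ℝ, 0 < τ0 ∧ ∀ τ : ℝ, 0 < τ → τ < τ0 → τ < 1 / Real.exp 1 →
      (∑' p : ℕ, τ * l (p + 1) / (τ + l (p + 1))) ≤ Cd * τ * (Real.log (1 / τ)) ^ d := by
  refine ⟨Real.exp 1 * max C 1 * (2 * (d : ℝ)) ^ d, 1, one_pos, ?_⟩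
  intro τ hτ0 hτ1 hτe
  set L : ℝ := Real.log (1 / τ) with hLdef
  have hL : 1 < L := by
    rw [hLdef]
    rw [show (1 : ℝ) < Real.log (1 / τ) ↔ Real.exp 1 < 1 / τ from
      Real.lt_log_iff_exp_lt (by positivity)]
    rw [lt_div_iff₀ hτ0]
    rw [lt_div_iff₀ (Real.exp_pos 1)] at hτe
    linarith
  have hLpos : 0 < L := by linarith
  set ε : ℝ := 1 / L with hεdef
  have hε0 : 0 < ε := by positivity
  have hε1 : ε < 1 := by rw [hεdef, div_lt_one hLpos]; exact hL
  obtain ⟨hsummable, hsum⟩ := sum_bound d hd hε0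
  set c : ℝ := τ ^ (1 - ε) * C ^ ε with hcdef
  have hcnn : 0 ≤ c := by positivity
  set g : ℕ → ℝ := fun p => c * Real.exp (-(ε * a d (p + 1))) with hg
  have hgnn : ∀ p, 0 ≤ g p := fun p => by positivity
  have hfg : ∀ p : ℕ, τ * l (p + 1) / (τ + l (p + 1)) ≤ g p := by
    intro p
    have hlp : 0 ≤ l (p + 1) := hl (p + 1) (by omega)
    have hubp : l (p + 1) ≤ C * Real.exp (-(((p : ℝ) + 1) ^ (1 / (d : ℝ)))) := by
      have := hub (p + 1) (by omega)
      push_cast at this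
      exact this
    rcases eq_or_lt_of_le hlp with h0 | hlpos
    · rw [← h0]
      simpa using hgnn p
    · set lam := l (p + 1)
      have hden : 0 < τ + lam := by linarith
      have hmin : τ * lam / (τ + lam) ≤ min τ lam := by
        rw [le_min_iff]
        constructor
        · rw [div_le_iff₀ hden]; nlinarith
        · rw [div_le_iff₀ hden]; nlinarith
      have hminpos : 0 < min τ lam := lt_min hτ0 hlpos
      have hsplit : min τ lam = (min τ lam) ^ (1 - ε) * (min τ lam) ^ ε := by
        rw [← Real.rpow_add hminpos]
        norm_num
      have h1 : (min τ lam) ^ (1 - ε) ≤ τ ^ (1 - ε) :=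
        Real.rpow_le_rpow hminpos.le (min_le_left _ _) (by linarith)
      have h2 : (min τ lam) ^ ε ≤ lam ^ ε :=
        Real.rpow_le_rpow hminpos.le (min_le_right _ _) hε0.le
      have h3 : lam ^ ε ≤ (C * Real.exp (-(((p : ℝ) + 1) ^ (1 / (d : ℝ))))) ^ ε :=
        Real.rpow_le_rpow hlpos.le hubp hε0.le
      have h4 : (C * Real.exp (-(((p : ℝ) + 1) ^ (1 / (d : ℝ))))) ^ ε =
          C ^ ε * Real.exp (-(ε * a d (p + 1))) := by
        rw [Real.mul_rpow hC.le (Real.exp_pos _).le]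
        congr 1
        rw [Real.rpow_def_of_pos (Real.exp_pos _), Real.log_exp]
        congr 1
        rw [a]
        push_cast
        ring
      calc τ * lam / (τ + lam) ≤ min τ lam := hmin
        _ = (min τ lam) ^ (1 - ε) * (min τ lam) ^ ε := hsplit
        _ ≤ τ ^ (1 - ε) * (lam ^ ε) := by
            apply mul_le_mul h1 h2 (Real.rpow_nonneg hminpos.le _) (Real.rpow_nonneg hτ0.le _)
        _ ≤ τ ^ (1 - ε) * (C ^ ε * Real.exp (-(ε * a d (p + 1)))) := by
            rw [← h4]
            exact mul_le_mul_of_nonneg_left h3 (Real.rpow_nonneg hτ0.le _)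
        _ = g p := by rw [hg, hcdef]; ring
  have hgsum : Summable g := hsummable.mul_left c
  have hfnn : ∀ p : ℕ, 0 ≤ τ * l (p + 1) / (τ + l (p + 1)) := by
    intro p
    have hlp : 0 ≤ l (p + 1) := hl (p + 1) (by omega)
    positivity
  have hfsum : Summable (fun p : ℕ => τ * l (p + 1) / (τ + l (p + 1))) :=
    Summable.of_nonneg_of_le hfnn hfg hgsum
  -- numeric facts
  have hτpow : τ ^ (1 - ε) = τ * Real.exp 1 := by
    have h1 : (1 : ℝ) - ε = 1 + (-ε) := by ring
    rw [h1, Real.rpow_add hτ0, Real.rpow_one]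
    congr 1
    rw [Real.rpow_def_of_pos hτ0]
    congr 1
    have hlogτ : Real.log τ = -L := by
      rw [hLdef, one_div, Real.log_inv]; ring
    rw [hlogτ, hεdef]
    field_simp
  have hCε : C ^ ε ≤ max C 1 := by
    rcases le_total C 1 with h | h
    · exact le_trans (Real.rpow_le_one hC.le h hε0.le) (le_max_right _ _)
    · refine le_trans ?_ (le_max_left _ _)
      calc C ^ ε ≤ C ^ (1 : ℝ) := Real.rpow_le_rpow_of_exponent_le h hε1.le
        _ = C := Real.rpow_one C
  have hεd : (2 * (d : ℝ)) ^ d / ε ^ d = (2 * (d : ℝ)) ^ d * L ^ d := by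
    rw [hεdef, div_pow, one_pow]
    field_simp
  calc (∑' p : ℕ, τ * l (p + 1) / (τ + l (p + 1))) ≤ ∑' p, g p :=
        Summable.tsum_le_tsum hfg hfsum hgsum
    _ = c * ∑' p, Real.exp (-(ε * a d (p + 1))) := tsum_mul_left
    _ ≤ c * ((2 * (d : ℝ)) ^ d / ε ^ d) := mul_le_mul_of_nonneg_left hsum hcnn
    _ = (τ * Real.exp 1) * C ^ ε * ((2 * (d : ℝ)) ^ d * L ^ d) := by
        rw [hcdef, hτpow, hεd]
    _ ≤ (τ * Real.exp 1) * max C 1 * ((2 * (d : ℝ)) ^ d * L ^ d) := by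
        apply mul_le_mul_of_nonneg_right
        · exact mul_le_mul_of_nonneg_left hCε (by positivity)
        · positivity
    _ = Real.exp 1 * max C 1 * (2 * (d : ℝ)) ^ d * τ * L ^ d := by ring
end

section
/- Degenerate-kernel learning curve: let k(x,x') = ∑_{p=1}^{P} λ_p φ_p(x)φ_p(x') with P finite, λ_p > 0, (φ_p) orthonormal in L²(μ) with E_μ[φ_p(X)⁴] < ∞, and X₁,X₂,… i.i.d. ∼ μ. Then the Gaussian process regression MSE σ²_n(x) = k(x,x) − k_n(x)ᵀ(K_n + nτI)⁻¹k_n(x) converges almost surely, as n → ∞, to ∑_{p=1}^P τλ_p φ_p(x)²/(τ+λ_p), for every x. -/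
open MeasureTheory ProbabilityTheory Matrix Filter Finset Topology

/-!
Write `Φ` for the `n × P` design matrix `(φ_p(X_i))` and `Λ = diag λ`. Then `K_n = Φ Λ Φᵀ`,
`k_n(x) = Φ Λ φ(x)` and `k(x,x) = φ(x)ᵀ Λ φ(x)`, so the Woodbury identity rewrites the posterior
variance as `φ(x)ᵀ (Λ⁻¹ + τ⁻¹ ΦᵀΦ / n)⁻¹ φ(x)`. By the strong law of large numbers and
orthonormality, `ΦᵀΦ / n → I` almost surely, and matrix inversion is continuous at the invertible
diagonal matrix `Λ⁻¹ + τ⁻¹ I`, whose inverse has entries `τ λ_p / (τ + λ_p)`.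
-/

namespace Matrix

variable {m ι 𝕜 : Type*} [Fintype m] [DecidableEq m] [Fintype ι]

section Field

variable [DecidableEq ι] [Field 𝕜]

theorem inv_add_smul_transpose_mul_eq_sub {Λ : Matrix ι ι 𝕜} (Φ : Matrix m ι 𝕜) {c : 𝕜}
    (hc : c ≠ 0) (hΛ : IsUnit Λ) (hK : IsUnit (Φ * Λ * Φᵀ + c • 1)) :
    (Λ⁻¹ + c⁻¹ • (Φᵀ * Φ))⁻¹ = Λ - Λ * Φᵀ * (Φ * Λ * Φᵀ + c • 1)⁻¹ * Φ * Λ := by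
  have hinv : (c⁻¹ • (1 : Matrix m m 𝕜))⁻¹ = c • 1 :=
    inv_eq_right_inv (by rw [smul_mul_smul, Matrix.one_mul, inv_mul_cancel₀ hc, one_smul])
  have hΛinv : Λ⁻¹⁻¹ = Λ := nonsing_inv_nonsing_inv _ ((isUnit_iff_isUnit_det _).1 hΛ)
  have := add_mul_mul_inv_eq_sub Λ⁻¹ Φᵀ (c⁻¹ • (1 : Matrix m m 𝕜)) Φ
    (isUnit_nonsing_inv_iff.2 hΛ) (isUnit_one.smul (inv_ne_zero hc).isUnit.unit)
    (by rwa [hinv, hΛinv, add_comm])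
  rwa [hinv, hΛinv, add_comm (c • 1), Matrix.mul_smul, Matrix.mul_one, smul_mul] at this

theorem dotProduct_mulVec_sub_eq {Λ : Matrix ι ι 𝕜} (Φ : Matrix m ι 𝕜) {c : 𝕜}
    (hc : c ≠ 0) (hΛ : IsUnit Λ) (hΛT : Λᵀ = Λ) (hK : IsUnit (Φ * Λ * Φᵀ + c • 1))
    (v : ι → 𝕜) :
    v ⬝ᵥ (Λ *ᵥ v) - (Φ *ᵥ (Λ *ᵥ v)) ⬝ᵥ ((Φ * Λ * Φᵀ + c • 1)⁻¹ *ᵥ (Φ *ᵥ (Λ *ᵥ v))) =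
      v ⬝ᵥ ((Λ⁻¹ + c⁻¹ • (Φᵀ * Φ))⁻¹ *ᵥ v) := by
  rw [inv_add_smul_transpose_mul_eq_sub Φ hc hΛ hK, sub_mulVec, dotProduct_sub]
  congr 1
  simp only [← mulVec_mulVec]
  rw [dotProduct_mulVec v, ← mulVec_transpose, hΛT, dotProduct_mulVec (Λ *ᵥ v), vecMul_transpose]

end Field

theorem posDef_mul_mul_transpose_add_smul_one {Λ : Matrix ι ι ℝ} (hΛ : Λ.PosSemidef)
    (Φ : Matrix m ι ℝ) {c : ℝ} (hc : 0 < c) : (Φ * Λ * Φᵀ + c • 1).PosDef := by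
  have hK := hΛ.mul_mul_conjTranspose_same Φ
  rw [conjTranspose_eq_transpose_of_trivial] at hK
  exact PosDef.posSemidef_add hK (PosDef.one.smul hc)

theorem dotProduct_mulVec_sub_eq_of_posDef [DecidableEq ι] {Λ : Matrix ι ι ℝ} (hΛ : Λ.PosDef)
    (Φ : Matrix m ι ℝ) {c : ℝ} (hc : 0 < c) (v : ι → ℝ) :
    v ⬝ᵥ (Λ *ᵥ v) - (Φ *ᵥ (Λ *ᵥ v)) ⬝ᵥ ((Φ * Λ * Φᵀ + c • 1)⁻¹ *ᵥ (Φ *ᵥ (Λ *ᵥ v))) =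
      v ⬝ᵥ ((Λ⁻¹ + c⁻¹ • (Φᵀ * Φ))⁻¹ *ᵥ v) :=
  dotProduct_mulVec_sub_eq Φ hc.ne' hΛ.isUnit
    (by simpa only [conjTranspose_eq_transpose_of_trivial] using hΛ.isHermitian.eq)
    (posDef_mul_mul_transpose_add_smul_one hΛ.posSemidef Φ hc).isUnit v

end Matrix

section Continuity

variable {ι 𝕜 β : Type*} [Fintype ι] [DecidableEq ι] [Field 𝕜] [TopologicalSpace 𝕜]
  [IsTopologicalDivisionRing 𝕜]

theorem Filter.Tendsto.dotProduct_inv_mulVec {l : Filter β} {A : β → Matrix ι ι 𝕜}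
    {L : Matrix ι ι 𝕜} (hA : Tendsto A l (𝓝 L)) (hL : L.det ≠ 0) (v : ι → 𝕜) :
    Tendsto (fun b => v ⬝ᵥ ((A b)⁻¹ *ᵥ v)) l (𝓝 (v ⬝ᵥ (L⁻¹ *ᵥ v))) := by
  have hinv : ContinuousAt Inv.inv L := by
    apply continuousAt_matrix_inv
    rw [Ring.inverse_eq_inv']
    exact continuousAt_inv₀ hL
  have hquad : Continuous fun B : Matrix ι ι 𝕜 => v ⬝ᵥ (B *ᵥ v) :=
    continuous_const.dotProduct (continuous_id.matrix_mulVec continuous_const)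
  exact (hquad.continuousAt.comp hinv).tendsto.comp hA

end Continuity

section Diagonal

variable {ι 𝕜 : Type*} [Fintype ι] [DecidableEq ι] [Field 𝕜] {d : ι → 𝕜}

theorem inv_diagonal_of_ne_zero (hd : ∀ p, d p ≠ 0) : (diagonal d)⁻¹ = diagonal d⁻¹ :=
  inv_eq_right_inv (by simp [diagonal_mul_diagonal, mul_inv_cancel₀ (hd _)])

theorem dotProduct_inv_diagonal_mulVec (hd : ∀ p, d p ≠ 0) (v : ι → 𝕜) :
    v ⬝ᵥ ((diagonal d)⁻¹ *ᵥ v) = ∑ p, v p ^ 2 / d p := by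
  simp only [inv_diagonal_of_ne_zero hd, dotProduct, mulVec_diagonal, Pi.inv_apply]
  exact Finset.sum_congr rfl fun p _ => by ring

end Diagonal

theorem Filter.Tendsto.dotProduct_inv_diagonal_add_smul_mulVec {ι β : Type*} [Fintype ι]
    [DecidableEq ι] {f : Filter β} {B : β → Matrix ι ι ℝ} (hB : Tendsto B f (𝓝 1))
    {l : ι → ℝ} (hl : ∀ p, 0 < l p) {τ : ℝ} (hτ : 0 < τ) (v : ι → ℝ) :
    Tendsto (fun b => v ⬝ᵥ (((diagonal l)⁻¹ + τ⁻¹ • B b)⁻¹ *ᵥ v)) f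
      (𝓝 (∑ p, τ * l p * v p ^ 2 / (τ + l p))) := by
  have hL : (diagonal l)⁻¹ + τ⁻¹ • (1 : Matrix ι ι ℝ) = diagonal fun p => (l p)⁻¹ + τ⁻¹ := by
    rw [inv_diagonal_of_ne_zero fun p => (hl p).ne', smul_one_eq_diagonal, diagonal_add]
    rfl
  have hLne : ∀ p, (l p)⁻¹ + τ⁻¹ ≠ 0 := fun p => by have := hl p; positivity
  have hLdet : ((diagonal l)⁻¹ + τ⁻¹ • (1 : Matrix ι ι ℝ)).det ≠ 0 := by
    rw [hL, det_diagonal]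
    exact prod_ne_zero_iff.2 fun p _ => hLne p
  have hlim := (tendsto_const_nhds.add (hB.const_smul τ⁻¹)).dotProduct_inv_mulVec hLdet v
  rw [hL, dotProduct_inv_diagonal_mulVec hLne] at hlim
  convert hlim using 3 with p
  have := hl p
  field_simp

section DesignMatrix

variable {α ι : Type*}

def designMatrix (φ : ι → α → ℝ) (xs : ℕ → α) (n : ℕ) : Matrix (Fin n) ι ℝ :=
  Matrix.of fun i p => φ p (xs i)

theorem designMatrix_transpose_mul_apply (φ : ι → α → ℝ) (xs : ℕ → α) (n : ℕ) (p q : ι) :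
    ((designMatrix φ xs n)ᵀ * designMatrix φ xs n) p q =
      ∑ i ∈ range n, φ p (xs i) * φ q (xs i) := by
  simp only [designMatrix, mul_apply, transpose_apply, of_apply]
  exact Fin.sum_univ_eq_sum_range (fun i => φ p (xs i) * φ q (xs i)) n

variable [Fintype ι] [DecidableEq ι] {k : α → α → ℝ} {l : ι → ℝ} {φ : ι → α → ℝ}

theorem kernel_eq_dotProduct_diagonal_mulVec (hk : ∀ x y, k x y = ∑ p, l p * φ p x * φ p y)
    (x y : α) : k x y = (fun p => φ p x) ⬝ᵥ (diagonal l *ᵥ fun p => φ p y) := by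
  simp only [hk, dotProduct, mulVec_diagonal]
  exact Finset.sum_congr rfl fun p _ => by ring

theorem of_kernel_eq_designMatrix_mul (hk : ∀ x y, k x y = ∑ p, l p * φ p x * φ p y)
    (xs : ℕ → α) (n : ℕ) :
    (Matrix.of fun i j : Fin n => k (xs i) (xs j)) =
      designMatrix φ xs n * diagonal l * (designMatrix φ xs n)ᵀ := by
  ext i j
  rw [mul_apply]
  simp only [of_apply, hk, mul_diagonal, transpose_apply, designMatrix]
  exact Finset.sum_congr rfl fun p _ => by ring

theorem kernel_vector_eq_designMatrix_mulVec (hk : ∀ x y, k x y = ∑ p, l p * φ p x * φ p y)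
    (x : α) (xs : ℕ → α) (n : ℕ) :
    (fun i : Fin n => k x (xs i)) = designMatrix φ xs n *ᵥ (diagonal l *ᵥ fun p => φ p x) := by
  ext i
  rw [show diagonal l *ᵥ (fun p => φ p x) = fun p => l p * φ p x from funext (mulVec_diagonal _ _)]
  simp only [hk, mulVec, dotProduct, designMatrix, of_apply]
  exact Finset.sum_congr rfl fun p _ => by ring

theorem kernel_sub_dotProduct_inv_mulVec_eq (hk : ∀ x y, k x y = ∑ p, l p * φ p x * φ p y)
    (hl : ∀ p, 0 < l p) {τ : ℝ} (hτ : 0 < τ) {n : ℕ} (hn : 0 < n) (x : α) (xs : ℕ → α) :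
    k x x - (fun i : Fin n => k x (xs i)) ⬝ᵥ
        (((Matrix.of fun i j : Fin n => k (xs i) (xs j)) + ((n : ℝ) * τ) • 1)⁻¹ *ᵥ
          fun i : Fin n => k x (xs i)) =
      (fun p => φ p x) ⬝ᵥ (((diagonal l)⁻¹ +
        τ⁻¹ • ((n : ℝ)⁻¹ • ((designMatrix φ xs n)ᵀ * designMatrix φ xs n)))⁻¹ *ᵥ
          fun p => φ p x) := by
  rw [of_kernel_eq_designMatrix_mul hk, kernel_vector_eq_designMatrix_mulVec hk,
    kernel_eq_dotProduct_diagonal_mulVec hk,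
    dotProduct_mulVec_sub_eq_of_posDef (posDef_diagonal_iff.2 hl) _ (by positivity),
    _root_.mul_inv_rev, smul_smul]

end DesignMatrix

section StrongLaw

variable {Ω α : Type*} [MeasurableSpace Ω] [MeasurableSpace α] {P : Measure Ω} {μ : Measure α}
  {X : ℕ → Ω → α}

theorem ae_tendsto_average_comp (hXm : ∀ i, Measurable (X i)) (hindep : iIndepFun X P)
    (hlaw : ∀ i, P.map (X i) = μ) {f : α → ℝ} (hfm : Measurable f) (hfi : Integrable f μ) :
    ∀ᵐ ω ∂P, Tendsto (fun n : ℕ => (∑ i ∈ range n, f (X i ω)) / n) atTop (𝓝 (∫ a, f a ∂μ)) := by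
  have hident : ∀ i, IdentDistrib (fun ω => f (X i ω)) (fun ω => f (X 0 ω)) P P := fun i =>
    IdentDistrib.comp ⟨(hXm i).aemeasurable, (hXm 0).aemeasurable, by rw [hlaw, hlaw]⟩ hfm
  have hint : Integrable (fun ω => f (X 0 ω)) P :=
    (integrable_map_measure hfm.aestronglyMeasurable (hXm 0).aemeasurable).1 (hlaw 0 ▸ hfi)
  have hmean : ∫ ω, f (X 0 ω) ∂P = ∫ a, f a ∂μ := by
    rw [← hlaw 0, integral_map (hXm 0).aemeasurable hfm.aestronglyMeasurable]
  simpa only [hmean] using strong_law_ae_real (fun i ω => f (X i ω)) hint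
    (fun i j hij => (hindep.indepFun hij).comp hfm hfm) hident

theorem ae_tendsto_gram_designMatrix {ι : Type*} [Fintype ι] (hXm : ∀ i, Measurable (X i))
    (hindep : iIndepFun X P) (hlaw : ∀ i, P.map (X i) = μ) {φ : ι → α → ℝ}
    (hφm : ∀ p, Measurable (φ p)) (hφ : ∀ p, MemLp (φ p) 2 μ) :
    ∀ᵐ ω ∂P, Tendsto (fun n : ℕ =>
        (n : ℝ)⁻¹ • ((designMatrix φ (X · ω) n)ᵀ * designMatrix φ (X · ω) n)) atTop
      (𝓝 (Matrix.of fun p q => ∫ a, φ p a * φ q a ∂μ)) := by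
  have hpq : ∀ pq : ι × ι, ∀ᵐ ω ∂P, Tendsto
      (fun n : ℕ => (∑ i ∈ range n, φ pq.1 (X i ω) * φ pq.2 (X i ω)) / n) atTop
      (𝓝 (∫ a, φ pq.1 a * φ pq.2 a ∂μ)) := fun pq =>
    ae_tendsto_average_comp hXm hindep hlaw ((hφm pq.1).mul (hφm pq.2))
      ((hφ pq.1).integrable_mul (hφ pq.2))
  filter_upwards [ae_all_iff.2 hpq] with ω hω
  refine tendsto_pi_nhds.2 fun p => tendsto_pi_nhds.2 fun q => ?_
  simp only [Matrix.smul_apply, designMatrix_transpose_mul_apply, of_apply, smul_eq_mul,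
    inv_mul_eq_div]
  exact hω (p, q)

end StrongLaw

theorem stmt16_general {Ω α : Type*} [MeasurableSpace Ω] [MeasurableSpace α]
    (P : Measure Ω) (μ : Measure α)
    (X : ℕ → Ω → α) (hXm : ∀ i, Measurable (X i))
    (hindep : iIndepFun X P)
    (hlaw : ∀ i, Measure.map (X i) P = μ)
    (Pk : ℕ) (l : Fin Pk → ℝ) (hl : ∀ p, 0 < l p)
    (φ : Fin Pk → α → ℝ) (hφm : ∀ p, Measurable (φ p))
    (horth : ∀ p q, ∫ x, φ p x * φ q x ∂μ = if p = q then 1 else 0)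
    (k : α → α → ℝ) (hk : ∀ x y, k x y = ∑ p, l p * φ p x * φ p y)
    (τ : ℝ) (hτ : 0 < τ) :
    ∀ x : α, ∀ᵐ ω ∂P,
      Filter.Tendsto
        (fun n : ℕ =>
          k x x -
            (fun i : Fin n => k x (X i ω)) ⬝ᵥ
              (((Matrix.of fun i j : Fin n => k (X i ω) (X j ω)) +
                  ((n : ℝ) * τ) • (1 : Matrix (Fin n) (Fin n) ℝ))⁻¹ *ᵥ
                fun i : Fin n => k x (X i ω)))
        Filter.atTop (nhds (∑ p, τ * l p * (φ p x) ^ 2 / (τ + l p))) := by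
  intro x
  have hφ2 : ∀ p, MemLp (φ p) 2 μ := fun p =>
    (memLp_two_iff_integrable_sq (hφm p).aestronglyMeasurable).2 <|
      Integrable.of_integral_ne_zero (by simp [sq, horth])
  have hgram : (Matrix.of fun p q => ∫ a, φ p a * φ q a ∂μ) = 1 := by
    ext p q
    rw [of_apply, horth, one_apply]
  filter_upwards [ae_tendsto_gram_designMatrix hXm hindep hlaw hφm hφ2] with ω hω
  rw [hgram] at hω
  refine (hω.dotProduct_inv_diagonal_add_smul_mulVec hl hτ fun p => φ p x).congr' ?_
  filter_upwards [eventually_gt_atTop 0] with n hn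
  exact (kernel_sub_dotProduct_inv_mulVec_eq hk hl hτ hn x (X · ω)).symm

theorem stmt16 {Ω α : Type*} [MeasurableSpace Ω] [MeasurableSpace α]
    (P : Measure Ω) [IsProbabilityMeasure P] (μ : Measure α) [IsProbabilityMeasure μ]
    (X : ℕ → Ω → α) (hXm : ∀ i, Measurable (X i))
    (hindep : iIndepFun X P)
    (hlaw : ∀ i, Measure.map (X i) P = μ)
    (Pk : ℕ) (l : Fin Pk → ℝ) (hl : ∀ p, 0 < l p)
    (φ : Fin Pk → α → ℝ) (hφm : ∀ p, Measurable (φ p))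
    (horth : ∀ p q, ∫ x, φ p x * φ q x ∂μ = if p = q then 1 else 0)
    (hmom4 : ∀ p, Integrable (fun x => (φ p x) ^ 4) μ)
    (k : α → α → ℝ) (hk : ∀ x y, k x y = ∑ p, l p * φ p x * φ p y)
    (τ : ℝ) (hτ : 0 < τ) :
    ∀ x : α, ∀ᵐ ω ∂P,
      Filter.Tendsto
        (fun n : ℕ =>
          k x x -
            (fun i : Fin n => k x (X i ω)) ⬝ᵥ
              (((Matrix.of fun i j : Fin n => k (X i ω) (X j ω)) +
                  ((n : ℝ) * τ) • (1 : Matrix (Fin n) (Fin n) ℝ))⁻¹ *ᵥ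
                fun i : Fin n => k x (X i ω)))
        Filter.atTop (nhds (∑ p, τ * l p * (φ p x) ^ 2 / (τ + l p))) :=
  stmt16_general P μ X hXm hindep hlaw Pk l hl φ hφm horth k hk τ hτ
end

section
/- Combinatorial moment bound: for i.i.d. random variables X₁,…,X_n with law μ and nonnegative measurable functions ψ₁,…,ψ_j with E_μ[∏_{i∈I} ψ_i(X)] < ∞ for every subset I ⊆ {1,…,j}, one has for all indices t₁,…,t_j ∈ {1,…,n}: E[∏_{i=1}^j ψ_i(X_{t_i})] ≤ ∑_{partitions P of {1,…,j}, P = ∪_r I_r} ∏_r E_μ[∏_{i∈I_r} ψ_i(X)]. -/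
/-!
The indices `t` split `{1, …, j}` into the fibers `t⁻¹' {s}`. Grouping the factors by fiber,
independence and the common law `μ` turn the left side into `∏_s E_μ[∏_{i ∈ t⁻¹' {s}} ψ_i]`,
which is the term of the sum belonging to the partition into fibers; all other terms are
nonnegative.
-/

open MeasureTheory ProbabilityTheory Finset

theorem ProbabilityTheory.iIndepFun.integral_finset_prod_comp_of_map_eq
    {Ω α ι 𝕜 : Type*} [MeasurableSpace Ω] [MeasurableSpace α] [RCLike 𝕜]
    {P : Measure Ω} {μ : Measure α} {X : ι → Ω → α}
    (hX : iIndepFun X P) (hXm : ∀ i, AEMeasurable (X i) P) (hlaw : ∀ i, P.map (X i) = μ)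
    {f : ι → α → 𝕜} (hf : ∀ i, AEStronglyMeasurable (f i) μ) (S : Finset ι) :
    ∫ ω, ∏ i ∈ S, f i (X i ω) ∂P = ∏ i ∈ S, ∫ x, f i x ∂μ := by
  have hXS : iIndepFun (fun i : S ↦ X i) P := hX.precomp Subtype.val_injective
  calc ∫ ω, ∏ i ∈ S, f i (X i ω) ∂P
      = ∫ ω, ∏ i : S, f i (X i ω) ∂P := by
        congr 1 with ω; exact (prod_coe_sort S _).symm
    _ = ∏ i : S, ∫ ω, f i (X i ω) ∂P :=
      hXS.integral_fun_prod_comp (fun i ↦ hXm i) fun i ↦ (hlaw i).symm ▸ hf i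
    _ = ∏ i ∈ S, ∫ x, f i x ∂μ := by
      rw [← prod_coe_sort S]
      refine prod_congr rfl fun i _ ↦ ?_
      rw [← hlaw i, integral_map (hXm i) ((hlaw i).symm ▸ hf i)]

theorem Finset.prod_univ_eq_prod_image_prod_fiber {ι κ M : Type*} [Fintype ι] [DecidableEq κ]
    [CommMonoid M] (t : ι → κ) (f : ι → κ → M) :
    ∏ i, f i (t i) = ∏ s ∈ univ.image t, ∏ i with t i = s, f i s := by
  rw [← prod_fiberwise_of_maps_to (fun i _ ↦ mem_image_of_mem t (mem_univ i))]
  exact prod_congr rfl fun s _ ↦ prod_congr rfl fun i hi ↦ by rw [(mem_filter.1 hi).2]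

theorem Finpartition.prod_parts_ofSetoid_ker {ι κ M : Type*} [Fintype ι] [DecidableEq ι]
    [DecidableEq κ] [CommMonoid M] (t : ι → κ) [DecidableRel (Setoid.ker t).r]
    (F : Finset ι → M) :
    ∏ I ∈ (ofSetoid (Setoid.ker t)).parts, F I = ∏ s ∈ univ.image t, F {i | t i = s} := by
  have hparts : (ofSetoid (Setoid.ker t)).parts =
      (univ.image t).image fun s ↦ ({i | t i = s} : Finset ι) := by
    rw [image_image]
    refine image_congr fun a _ ↦ ?_
    ext b
    simp [Setoid.ker_def, eq_comm]
  rw [hparts, prod_image]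
  intro s hs s' _ hss'
  obtain ⟨i, -, rfl⟩ := mem_image.1 hs
  simpa using (Finset.ext_iff.1 hss' i).1 (by simp)

open scoped Classical in
theorem Finpartition.parts_mem_filter_setPartition {ι : Type*} [Fintype ι] [DecidableEq ι]
    (P : Finpartition (univ : Finset ι)) :
    P.parts ∈ (univ : Finset (Finset (Finset ι))).filter
      (fun Q : Finset (Finset ι) ↦ Q.sup id = univ ∧ ∅ ∉ Q ∧
        Set.PairwiseDisjoint (Q : Set (Finset ι)) id) :=
  mem_filter.2 ⟨mem_univ _, P.sup_parts, P.bot_notMem, P.disjoint⟩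

open scoped Classical in
theorem stmt17_general {Ω α : Type*} [MeasurableSpace Ω] [MeasurableSpace α]
    (P : Measure Ω) (μ : Measure α)
    (X : ℕ → Ω → α) (hXm : ∀ i, Measurable (X i))
    (hindep : iIndepFun X P)
    (hlaw : ∀ i, Measure.map (X i) P = μ)
    (j : ℕ) (ψ : Fin j → α → ℝ) (hψm : ∀ i, Measurable (ψ i)) (hψ0 : ∀ i x, 0 ≤ ψ i x)
    (t : Fin j → ℕ) :
    ∫ ω, ∏ i, ψ i (X (t i) ω) ∂P ≤
      ∑ Q ∈ (Finset.univ : Finset (Finset (Finset (Fin j)))).filter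
          (fun Q : Finset (Finset (Fin j)) => Q.sup id = Finset.univ ∧ ∅ ∉ Q ∧
            Set.PairwiseDisjoint (Q : Set (Finset (Fin j))) id),
        ∏ I ∈ Q, ∫ x, ∏ i ∈ I, ψ i x ∂μ := by
  have hfibers : ∫ ω, ∏ i, ψ i (X (t i) ω) ∂P =
      ∏ I ∈ (Finpartition.ofSetoid (Setoid.ker t)).parts, ∫ x, ∏ i ∈ I, ψ i x ∂μ := by
    simp_rw [fun ω ↦ prod_univ_eq_prod_image_prod_fiber t fun i s ↦ ψ i (X s ω),
      Finpartition.prod_parts_ofSetoid_ker]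
    exact hindep.integral_finset_prod_comp_of_map_eq (fun s ↦ (hXm s).aemeasurable) hlaw
      (fun s ↦ (Finset.measurable_prod _ fun i _ ↦ hψm i).aestronglyMeasurable) _
  rw [hfibers]
  refine single_le_sum (f := fun Q ↦ ∏ I ∈ Q, ∫ x, ∏ i ∈ I, ψ i x ∂μ) (fun Q _ ↦ ?_)
    (Finpartition.parts_mem_filter_setPartition _)
  exact prod_nonneg fun I _ ↦ integral_nonneg fun x ↦ prod_nonneg fun i _ ↦ hψ0 i x

open scoped Classical in
theorem stmt17 {Ω α : Type*} [MeasurableSpace Ω] [MeasurableSpace α]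
    (P : Measure Ω) [IsProbabilityMeasure P] (μ : Measure α) [IsProbabilityMeasure μ]
    (X : ℕ → Ω → α) (hXm : ∀ i, Measurable (X i))
    (hindep : iIndepFun X P)
    (hlaw : ∀ i, Measure.map (X i) P = μ)
    (j : ℕ) (ψ : Fin j → α → ℝ) (hψm : ∀ i, Measurable (ψ i)) (hψ0 : ∀ i x, 0 ≤ ψ i x)
    (hint : ∀ I : Finset (Fin j), Integrable (fun x => ∏ i ∈ I, ψ i x) μ)
    (n : ℕ) (t : Fin j → ℕ) (ht : ∀ i, t i < n) :
    ∫ ω, ∏ i, ψ i (X (t i) ω) ∂P ≤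
      ∑ Q ∈ (Finset.univ : Finset (Finset (Finset (Fin j)))).filter
          (fun Q : Finset (Finset (Fin j)) => Q.sup id = Finset.univ ∧ ∅ ∉ Q ∧
            Set.PairwiseDisjoint (Q : Set (Finset (Fin j))) id),
        ∏ I ∈ Q, ∫ x, ∏ i ∈ I, ψ i x ∂μ :=
  stmt17_general P μ X hXm hindep hlaw j ψ hψm hψ0 t
end

section
/- Optimal two-point allocation (special case of Proposition 4): let n = 2 with diagonal 'covariance' values k₁, k₂ > 0, noise levels σ₁², σ₂² > 0, weights c₁, c₂ > 0, and total budget T ≥ 2 sufficiently large. Then the minimizer of F(s₁,s₂) = c₁σ₁²/(s₁k₁² + σ₁²k₁) + c₂σ₂²/(s₂k₂² + σ₂²k₂) + const over s₁+s₂ = T, s_i ≥ 1 is given by s_i = (1/k_i)[ (√(c_i σ_i²)/∑_j (√(c_j σ_j²)/k_j))·(T + ∑_j σ_j²/k_j) − σ_i² ] when this is ≥ 1 for both i. -/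
set_option maxHeartbeats 1000000


lemma fopt_eq (r0 r1 k0 k1 S : ℝ) (hr0 : 0 < r0) (hr1 : 0 < r1)
    (hk0 : 0 < k0) (hk1 : 0 < k1) (hS : 0 < S) :
    r0 ^ 2 / (k0 * (r0 / (r0 / k0 + r1 / k1) * S))
      + r1 ^ 2 / (k1 * (r1 / (r0 / k0 + r1 / k1) * S))
      = (r0 / k0 + r1 / k1) ^ 2 / S := by
  have hQ : 0 < r0 / k0 + r1 / k1 := by positivity
  field_simp

lemma key_cs (r0 r1 k0 k1 x0 x1 : ℝ)
    (hk0 : 0 < k0) (hk1 : 0 < k1) (hx0 : 0 < x0) (hx1 : 0 < x1) :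
    (r0 / k0 + r1 / k1) ^ 2 / (x0 / k0 ^ 2 + x1 / k1 ^ 2) ≤
      r0 ^ 2 / x0 + r1 ^ 2 / x1 := by
  have hden : 0 < x0 / k0 ^ 2 + x1 / k1 ^ 2 := by positivity
  rw [div_le_iff₀ hden]
  have h := sq_nonneg (r0 * x1 * k0 - r1 * x0 * k1)
  have e : (r0 ^ 2 / x0 + r1 ^ 2 / x1) * (x0 / k0 ^ 2 + x1 / k1 ^ 2)
      - (r0 / k0 + r1 / k1) ^ 2
      = (r0 * x1 * k0 - r1 * x0 * k1) ^ 2 / (x0 * x1 * k0 ^ 2 * k1 ^ 2) := by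
    field_simp
    ring
  nlinarith [div_nonneg h (by positivity : (0:ℝ) ≤ x0 * x1 * k0 ^ 2 * k1 ^ 2), e]

theorem stmt19 (k σsq c : Fin 2 → ℝ) (T : ℝ)
    (hk : ∀ i, 0 < k i) (hσ : ∀ i, 0 < σsq i) (hc : ∀ i, 0 < c i) (hT : 2 ≤ T)
    (sopt : Fin 2 → ℝ)
    (hsopt : ∀ i, sopt i =
      (1 / k i) *
        ((Real.sqrt (c i * σsq i) / ∑ j, Real.sqrt (c j * σsq j) / k j) *
            (T + ∑ j, σsq j / k j) -
          σsq i))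
    (hlarge : ∀ i, 1 ≤ sopt i) :
    (∑ i, sopt i = T) ∧
      ∀ s : Fin 2 → ℝ, (∀ i, 1 ≤ s i) → (∑ i, s i = T) →
        (∑ i, c i * σsq i / (sopt i * (k i) ^ 2 + σsq i * k i)) ≤
          ∑ i, c i * σsq i / (s i * (k i) ^ 2 + σsq i * k i) := by
  have hk0 := hk 0; have hk1 := hk 1
  have hσ0 := hσ 0; have hσ1 := hσ 1
  have hc0 := hc 0; have hc1 := hc 1
  set r0 := Real.sqrt (c 0 * σsq 0) with hr0def
  set r1 := Real.sqrt (c 1 * σsq 1) with hr1def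
  have hr0 : 0 < r0 := Real.sqrt_pos.2 (by positivity)
  have hr1 : 0 < r1 := Real.sqrt_pos.2 (by positivity)
  have hr0sq : r0 ^ 2 = c 0 * σsq 0 := Real.sq_sqrt (by positivity)
  have hr1sq : r1 ^ 2 = c 1 * σsq 1 := Real.sq_sqrt (by positivity)
  have hQ : 0 < r0 / k 0 + r1 / k 1 := by positivity
  have hS : 0 < T + (σsq 0 / k 0 + σsq 1 / k 1) := by nlinarith [div_pos hσ0 hk0, div_pos hσ1 hk1]
  have hs0 := hsopt 0; have hs1 := hsopt 1
  simp only [Fin.sum_univ_two, ← hr0def, ← hr1def] at hs0 hs1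
  have hsum : sopt 0 + sopt 1 = T := by
    rw [hs0, hs1]; field_simp; ring
  refine ⟨by simpa [Fin.sum_univ_two] using hsum, ?_⟩
  intro s hs hsT
  simp only [Fin.sum_univ_two] at hsT ⊢
  have hx0 : 0 < s 0 * k 0 ^ 2 + σsq 0 * k 0 := by nlinarith [hs 0]
  have hx1 : 0 < s 1 * k 1 ^ 2 + σsq 1 * k 1 := by nlinarith [hs 1]
  -- optimal value equals Q^2 / S
  have hxopt0 : sopt 0 * k 0 ^ 2 + σsq 0 * k 0
      = k 0 * (r0 / (r0 / k 0 + r1 / k 1) * (T + (σsq 0 / k 0 + σsq 1 / k 1))) := by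
    rw [hs0]; field_simp; ring
  have hxopt1 : sopt 1 * k 1 ^ 2 + σsq 1 * k 1
      = k 1 * (r1 / (r0 / k 0 + r1 / k 1) * (T + (σsq 0 / k 0 + σsq 1 / k 1))) := by
    rw [hs1]; field_simp; ring
  have hFopt : c 0 * σsq 0 / (sopt 0 * k 0 ^ 2 + σsq 0 * k 0)
      + c 1 * σsq 1 / (sopt 1 * k 1 ^ 2 + σsq 1 * k 1)
      = (r0 / k 0 + r1 / k 1) ^ 2 / (T + (σsq 0 / k 0 + σsq 1 / k 1)) := by
    rw [hxopt0, hxopt1, ← hr0sq, ← hr1sq]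
    exact fopt_eq r0 r1 (k 0) (k 1) _ hr0 hr1 hk0 hk1 hS
  rw [hFopt]
  have hSx : (s 0 * k 0 ^ 2 + σsq 0 * k 0) / k 0 ^ 2 + (s 1 * k 1 ^ 2 + σsq 1 * k 1) / k 1 ^ 2
      = T + (σsq 0 / k 0 + σsq 1 / k 1) := by
    rw [← hsT]; field_simp; ring
  calc (r0 / k 0 + r1 / k 1) ^ 2 / (T + (σsq 0 / k 0 + σsq 1 / k 1))
      = (r0 / k 0 + r1 / k 1) ^ 2 /
        ((s 0 * k 0 ^ 2 + σsq 0 * k 0) / k 0 ^ 2 + (s 1 * k 1 ^ 2 + σsq 1 * k 1) / k 1 ^ 2) := by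
        rw [hSx]
    _ ≤ r0 ^ 2 / (s 0 * k 0 ^ 2 + σsq 0 * k 0) + r1 ^ 2 / (s 1 * k 1 ^ 2 + σsq 1 * k 1) :=
        key_cs _ _ _ _ _ _ hk0 hk1 hx0 hx1
    _ = c 0 * σsq 0 / (s 0 * k 0 ^ 2 + σsq 0 * k 0) + c 1 * σsq 1 / (s 1 * k 1 ^ 2 + σsq 1 * k 1) := by
        rw [hr0sq, hr1sq]
end
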